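/- Let R be a Γ-graded ring and M a Γ-graded right R-module. The following are equivalent: (1) M is gr-semisimple and finitely generated; (2) M is gr-semisimple and gr-noetherian; (3) M is gr-semisimple and gr-artinian; (4) M is gr-semisimple and finitely gr-cogenerated; (5) M is a finite direct sum of gr-simple graded submodules; (6) rad^gr(M) = 0 and M is finitely gr-cogenerated; (7) rad^gr(M) = 0 and M is gr-artinian. -/

import Mathlib

open CategoryTheory

universe u

instance addSubgroupNormalOfComm {M : Type*} [AddCommGroup M] (N : AddSubgroup M) :
    N.Normal := ⟨fun n hn g => by simpa [add_comm] using hn⟩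

variable {Γ : Type u} [Groupoid.{u} Γ]

/-- The morphisms of the groupoid `Γ`, bundled together with their endpoints.
For `γ : GrIdx Γ`, the morphism `γ.2.2 : γ.1 ⟶ γ.2.1` has domain `d(γ) = γ.1`
and range `r(γ) = γ.2.1`. -/
abbrev GrIdx (Γ : Type u) [Groupoid.{u} Γ] : Type u := Σ e f : Γ, e ⟶ f

/-- The data of a `Γ`-grading, a multiplication, and local units `1_e` on an
additive group `R`. -/
structure GRingData (Γ : Type u) [Groupoid.{u} Γ] (R : Type u) [AddCommGroup R] :
    Type u where
  mul : R → R → R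
  component : ∀ {e f : Γ}, (e ⟶ f) → AddSubgroup R
  one : Γ → R

/-- The data of a right scalar multiplication by `R` and a `Γ`-grading on an
additive group `M`. -/
structure GModData (Γ : Type u) [Groupoid.{u} Γ] (R : Type u) (M : Type u)
    [AddCommGroup M] : Type u where
  smul : M → R → M
  component : ∀ {e f : Γ}, (e ⟶ f) → AddSubgroup M

namespace GRingData

variable {R : Type u} [AddCommGroup R]

/-- `𝒜` makes `R` an (object unital) `Γ`-graded ring: `R` is an associative ring,
`R = ⊕_γ R_γ`, `R_γ R_δ ⊆ R_{γδ}` when `γδ` is defined and `R_γ R_δ = 0` otherwise,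
each `R_e` (`e ∈ Γ₀`) is unital with identity `1_e`, and
`1_{r(γ)} a = a 1_{d(γ)} = a` for all `a ∈ R_γ`. -/
structure IsObjectUnital (𝒜 : GRingData Γ R) : Prop where
  mul_assoc : ∀ a b c : R, 𝒜.mul (𝒜.mul a b) c = 𝒜.mul a (𝒜.mul b c)
  left_distrib : ∀ a b c : R, 𝒜.mul a (b + c) = 𝒜.mul a b + 𝒜.mul a c
  right_distrib : ∀ a b c : R, 𝒜.mul (a + b) c = 𝒜.mul a c + 𝒜.mul b c
  decompose : ∀ x : R, ∃ (s : Finset (GrIdx Γ)) (cf : GrIdx Γ → R),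
      (∀ γ ∈ s, cf γ ∈ 𝒜.component γ.2.2) ∧ x = ∑ γ ∈ s, cf γ
  independent : ∀ (s : Finset (GrIdx Γ)) (cf : GrIdx Γ → R),
      (∀ γ ∈ s, cf γ ∈ 𝒜.component γ.2.2) → ∑ γ ∈ s, cf γ = 0 → ∀ γ ∈ s, cf γ = 0
  mul_mem : ∀ {e f g : Γ} (γ : e ⟶ f) (δ : g ⟶ e) {a b : R},
      a ∈ 𝒜.component γ → b ∈ 𝒜.component δ → 𝒜.mul a b ∈ 𝒜.component (δ ≫ γ)
  mul_eq_zero : ∀ {e f g h : Γ} (γ : e ⟶ f) (δ : g ⟶ h) {a b : R},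
      h ≠ e → a ∈ 𝒜.component γ → b ∈ 𝒜.component δ → 𝒜.mul a b = 0
  one_mem : ∀ e : Γ, 𝒜.one e ∈ 𝒜.component (𝟙 e)
  one_mul : ∀ {e f : Γ} (γ : e ⟶ f) {a : R}, a ∈ 𝒜.component γ → 𝒜.mul (𝒜.one f) a = a
  mul_one : ∀ {e f : Γ} (γ : e ⟶ f) {a : R}, a ∈ 𝒜.component γ → 𝒜.mul a (𝒜.one e) = a

/-- `R` regarded as a (`Γ`-graded) right module over itself. -/
def toMod (𝒜 : GRingData Γ R) : GModData Γ R R where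
  smul := 𝒜.mul
  component := fun γ => 𝒜.component γ

end GRingData

namespace GModData

variable {R : Type u} {M : Type u} {M' : Type u} [AddCommGroup M] [AddCommGroup M']

/-- `ℳ` makes `M` a unital `Γ`-graded right module over the `Γ`-graded ring `𝒜`:
`M` is a right `R`-module, `M = ⊕_γ M_γ`, `M_σ R_τ ⊆ M_{στ}` when `στ` is defined
and `M_σ R_τ = 0` otherwise, and `m 1_{d(σ)} = m` for all `m ∈ M_σ`. -/
structure IsGraded [AddCommGroup R] (𝒜 : GRingData Γ R) (ℳ : GModData Γ R M) :
    Prop where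
  add_smul : ∀ (m n : M) (a : R), ℳ.smul (m + n) a = ℳ.smul m a + ℳ.smul n a
  smul_add : ∀ (m : M) (a b : R), ℳ.smul m (a + b) = ℳ.smul m a + ℳ.smul m b
  smul_mul : ∀ (m : M) (a b : R), ℳ.smul m (𝒜.mul a b) = ℳ.smul (ℳ.smul m a) b
  decompose : ∀ x : M, ∃ (s : Finset (GrIdx Γ)) (cf : GrIdx Γ → M),
      (∀ γ ∈ s, cf γ ∈ ℳ.component γ.2.2) ∧ x = ∑ γ ∈ s, cf γ
  independent : ∀ (s : Finset (GrIdx Γ)) (cf : GrIdx Γ → M),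
      (∀ γ ∈ s, cf γ ∈ ℳ.component γ.2.2) → ∑ γ ∈ s, cf γ = 0 → ∀ γ ∈ s, cf γ = 0
  smul_mem : ∀ {e f g : Γ} (σ : e ⟶ f) (τ : g ⟶ e) {m : M} {a : R},
      m ∈ ℳ.component σ → a ∈ 𝒜.component τ → ℳ.smul m a ∈ ℳ.component (τ ≫ σ)
  smul_eq_zero : ∀ {e f g h : Γ} (σ : e ⟶ f) (τ : g ⟶ h) {m : M} {a : R},
      h ≠ e → m ∈ ℳ.component σ → a ∈ 𝒜.component τ → ℳ.smul m a = 0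
  smul_one : ∀ {e f : Γ} (σ : e ⟶ f) {m : M}, m ∈ ℳ.component σ →
      ℳ.smul m (𝒜.one e) = m

/-- An element of `M` is homogeneous if it belongs to some homogeneous component. -/
def IsHomogeneous (ℳ : GModData Γ R M) (m : M) : Prop :=
  ∃ (e f : Γ) (γ : e ⟶ f), m ∈ ℳ.component γ

/-- `N` is a graded submodule of `M`: a submodule (subgroup closed under the right
`R`-action) generated by its homogeneous elements, i.e. `N = ⊕_γ (N ∩ M_γ)`. -/
def IsGrSub (ℳ : GModData Γ R M) (N : AddSubgroup M) : Prop :=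
  (∀ m ∈ N, ∀ a : R, ℳ.smul m a ∈ N) ∧
  ∀ n ∈ N, n ∈ AddSubgroup.closure {x : M | x ∈ N ∧ ℳ.IsHomogeneous x}

/-- `M` is gr-noetherian: there is no strictly increasing infinite chain of graded
submodules. -/
def GrNoetherian (ℳ : GModData Γ R M) : Prop :=
  ¬ ∃ c : ℕ → AddSubgroup M, (∀ n, ℳ.IsGrSub (c n)) ∧ ∀ n, c n < c (n + 1)

/-- `M` is gr-artinian: there is no strictly decreasing infinite chain of graded
submodules. -/
def GrArtinian (ℳ : GModData Γ R M) : Prop :=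
  ¬ ∃ c : ℕ → AddSubgroup M, (∀ n, ℳ.IsGrSub (c n)) ∧ ∀ n, c (n + 1) < c n

/-- The `R`-submodule of `M` generated by a set `X`. -/
def rClosure (ℳ : GModData Γ R M) (X : Set M) : AddSubgroup M :=
  sInf {N : AddSubgroup M | X ⊆ N ∧ ∀ m ∈ N, ∀ a : R, ℳ.smul m a ∈ N}

/-- `M` is finitely generated (as a right `R`-module). -/
def FG (ℳ : GModData Γ R M) : Prop := ∃ s : Finset M, ℳ.rClosure ↑s = ⊤

/-- The submodule `N` of `M` is finitely generated. -/
def FGSub (ℳ : GModData Γ R M) (N : AddSubgroup M) : Prop :=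
  ∃ s : Finset M, ↑s ⊆ (N : Set M) ∧ ℳ.rClosure ↑s = N

/-- `M` is finitely gr-cogenerated: every family of graded submodules with zero
intersection has a finite subfamily with zero intersection. -/
def FinGrCogenerated (ℳ : GModData Γ R M) : Prop :=
  ∀ S : Set (AddSubgroup M), (∀ N ∈ S, ℳ.IsGrSub N) → sInf S = ⊥ →
    ∃ t : Finset (AddSubgroup M), ↑t ⊆ S ∧ t.inf id = ⊥

/-- The quotient module `M/N`, with grading `(M/N)_γ = (M_γ + N)/N`. -/
noncomputable def quot (ℳ : GModData Γ R M) (N : AddSubgroup M) :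
    GModData Γ R (M ⧸ N) where
  smul x a := QuotientAddGroup.mk (ℳ.smul (Quotient.out x) a)
  component := fun γ => (ℳ.component γ).map (QuotientAddGroup.mk' N)

open scoped Classical in
/-- The submodule `N`, regarded as a `Γ`-graded right `R`-module. -/
noncomputable def restrict (ℳ : GModData Γ R M) (N : AddSubgroup M) :
    GModData Γ R ↥N where
  smul m a := if h : ℳ.smul (↑m) a ∈ N then ⟨ℳ.smul (↑m) a, h⟩ else 0
  component := fun γ => (ℳ.component γ).addSubgroupOf N

/-- The subquotient module `P/N` (for `N ≤ P` graded submodules of `M`). -/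
noncomputable def subquot (ℳ : GModData Γ R M) (N P : AddSubgroup M) :
    GModData Γ R (↥P ⧸ N.addSubgroupOf P) :=
  (ℳ.restrict P).quot (N.addSubgroupOf P)

/-- `M(e) = ⊕_{r(γ) = e} M_γ`, for `e ∈ Γ₀`. -/
def part (ℳ : GModData Γ R M) (e : Γ) : AddSubgroup M :=
  ⨆ (f : Γ) (γ : f ⟶ e), ℳ.component γ

/-- `Γ'₀(M) = {e ∈ Γ₀ : M(e) ≠ 0}`. -/
def partSupport (ℳ : GModData Γ R M) : Set Γ := {e : Γ | ℳ.part e ≠ ⊥}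

/-- `M` is `Γ₀`-noetherian: `M(e)` is gr-noetherian for every `e ∈ Γ₀`. -/
def G0Noetherian (ℳ : GModData Γ R M) : Prop :=
  ∀ e : Γ, (ℳ.restrict (ℳ.part e)).GrNoetherian

/-- `M` is `Γ₀`-artinian: `M(e)` is gr-artinian for every `e ∈ Γ₀`. -/
def G0Artinian (ℳ : GModData Γ R M) : Prop :=
  ∀ e : Γ, (ℳ.restrict (ℳ.part e)).GrArtinian

/-- `M` is gr-simple: `M ≠ 0` and its only graded submodules are `0` and `M`. -/
def IsGrSimple (ℳ : GModData Γ R M) : Prop :=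
  (⊤ : AddSubgroup M) ≠ ⊥ ∧ ∀ N : AddSubgroup M, ℳ.IsGrSub N → N = ⊥ ∨ N = ⊤

/-- `N` is a gr-simple graded submodule of `M`. -/
def IsGrSimpleSub (ℳ : GModData Γ R M) (N : AddSubgroup M) : Prop :=
  ℳ.IsGrSub N ∧ N ≠ ⊥ ∧
    ∀ L : AddSubgroup M, ℳ.IsGrSub L → L ≤ N → L = ⊥ ∨ L = N

/-- `N` is a gr-maximal graded submodule of `M`. -/
def IsGrMaximalSub (ℳ : GModData Γ R M) (N : AddSubgroup M) : Prop :=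
  ℳ.IsGrSub N ∧ N ≠ ⊤ ∧
    ∀ L : AddSubgroup M, ℳ.IsGrSub L → N ≤ L → L = N ∨ L = ⊤

/-- The graded Jacobson radical of `M`: the intersection of all gr-maximal graded
submodules of `M` (equal to `M` when there are none). -/
def grRad (ℳ : GModData Γ R M) : AddSubgroup M := sInf {N | ℳ.IsGrMaximalSub N}

/-- The gr-socle of `M`: the sum of all gr-simple graded submodules of `M`
(equal to `0` when there are none). -/
def grSoc (ℳ : GModData Γ R M) : AddSubgroup M := sSup {N | ℳ.IsGrSimpleSub N}

/-- `N` is gr-superfluous in `M`. -/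
def GrSuperfluous (ℳ : GModData Γ R M) (N : AddSubgroup M) : Prop :=
  ∀ X : AddSubgroup M, ℳ.IsGrSub X → N ⊔ X = ⊤ → X = ⊤

/-- `N` is gr-essential in `M`. -/
def GrEssential (ℳ : GModData Γ R M) (N : AddSubgroup M) : Prop :=
  ∀ X : AddSubgroup M, ℳ.IsGrSub X → N ⊓ X = ⊥ → X = ⊥

/-- `M` is gr-semisimple: the sum of all gr-simple graded submodules is `M`. -/
def GrSemisimple (ℳ : GModData Γ R M) : Prop :=
  sSup {N : AddSubgroup M | ℳ.IsGrSimpleSub N} = ⊤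

/-- `c 0 = 0 ⊆ c 1 ⊆ ⋯ ⊆ c n = M` is a gr-composition series of `M` of length `n`. -/
def IsGrCompSeries (ℳ : GModData Γ R M) (n : ℕ) (c : ℕ → AddSubgroup M) : Prop :=
  c 0 = ⊥ ∧ c n = ⊤ ∧ (∀ i, i ≤ n → ℳ.IsGrSub (c i)) ∧
  (∀ i, i < n → c i ≤ c (i + 1)) ∧
  ∀ i, i < n → (ℳ.subquot (c i) (c (i + 1))).IsGrSimple

/-- `M` has finite gr-length: it admits a gr-composition series. -/
def FiniteGrLength (ℳ : GModData Γ R M) : Prop := ∃ n c, ℳ.IsGrCompSeries n c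

/-- `g : M → M'` is a gr-homomorphism of graded right `R`-modules. -/
def IsGrHom (ℳ : GModData Γ R M) (𝒩 : GModData Γ R M') (g : M → M') : Prop :=
  (∀ m n : M, g (m + n) = g m + g n) ∧
  (∀ (m : M) (a : R), g (ℳ.smul m a) = 𝒩.smul (g m) a) ∧
  ∀ (e f : Γ) (σ : e ⟶ f), ∀ m ∈ ℳ.component σ, g m ∈ 𝒩.component σ

/-- `M` and `M'` are gr-isomorphic (there is a bijective gr-homomorphism). -/
def GrIso (ℳ : GModData Γ R M) (𝒩 : GModData Γ R M') : Prop :=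
  ∃ g : M → M', IsGrHom ℳ 𝒩 g ∧ Function.Bijective g

/-- `g : M → M'` is a homomorphism of degree `γ` (where `γ : e ⟶ f`, i.e.
`d(γ) = e`): `g(M_σ) ⊆ M'_{γσ}` when `γσ` is defined and `g(M_σ) = 0` otherwise. -/
def IsHomOfDeg (ℳ : GModData Γ R M) (𝒩 : GModData Γ R M') {e f : Γ} (γ : e ⟶ f)
    (g : M → M') : Prop :=
  (∀ m n : M, g (m + n) = g m + g n) ∧
  (∀ (m : M) (a : R), g (ℳ.smul m a) = 𝒩.smul (g m) a) ∧
  (∀ (a : Γ) (σ : a ⟶ e), ∀ m ∈ ℳ.component σ, g m ∈ 𝒩.component (σ ≫ γ)) ∧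
  (∀ (a b : Γ) (σ : a ⟶ b), b ≠ e → ∀ m ∈ ℳ.component σ, g m = 0)

/-- `MJ`: the submodule of `M` consisting of finite sums of elements `m a`,
`m ∈ M`, `a ∈ J`. -/
def smulSet [AddCommGroup R] (ℳ : GModData Γ R M) (J : AddSubgroup R) : AddSubgroup M :=
  AddSubgroup.closure {x : M | ∃ (m : M) (a : R), a ∈ J ∧ x = ℳ.smul m a}

open scoped Classical in
/-- The direct sum `⊕_{j ∈ J} M_j` of graded right modules, with grading
`(⊕_j M_j)_γ = ⊕_j (M_j)_γ`. -/
noncomputable def dsum {J : Type u} {Mf : J → Type u} [∀ j, AddCommGroup (Mf j)]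
    (df : ∀ j, GModData Γ R (Mf j)) : GModData Γ R (Π₀ j, Mf j) where
  smul m a :=
    if h : ∃ y : Π₀ j, Mf j, ∀ j, y j = (df j).smul (m j) a then h.choose else 0
  component := fun γ => ⨅ j : J, ((df j).component γ).comap (DFinsupp.evalAddMonoidHom j)

/-- A descending chain of graded submodules is tight if
`Γ'₀(M_i/M_{i+1}) ⊇ Γ'₀(M_{i+1}/M_{i+2})` for all `i`. -/
def TightDesc (ℳ : GModData Γ R M) (c : ℕ → AddSubgroup M) : Prop :=
  (∀ i, ℳ.IsGrSub (c i)) ∧ (∀ i, c (i + 1) ≤ c i) ∧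
  ∀ i, (ℳ.subquot (c (i + 2)) (c (i + 1))).partSupport ⊆
    (ℳ.subquot (c (i + 1)) (c i)).partSupport

/-- An ascending chain of graded submodules is tight if
`Γ'₀(M_{i+1}/M_i) ⊇ Γ'₀(M_{i+2}/M_{i+1})` for all `i`. -/
def TightAsc (ℳ : GModData Γ R M) (c : ℕ → AddSubgroup M) : Prop :=
  (∀ i, ℳ.IsGrSub (c i)) ∧ (∀ i, c i ≤ c (i + 1)) ∧
  ∀ i, (ℳ.subquot (c (i + 1)) (c (i + 2))).partSupport ⊆
    (ℳ.subquot (c i) (c (i + 1))).partSupport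

/-- `M` is strongly `Γ₀`-artinian: every tight descending chain of graded
submodules stabilizes. -/
def StronglyG0Artinian (ℳ : GModData Γ R M) : Prop :=
  ∀ c : ℕ → AddSubgroup M, ℳ.TightDesc c → ∃ n, ∀ m, n ≤ m → c m = c n

/-- `M` is strongly `Γ₀`-noetherian: every tight ascending chain of graded
submodules stabilizes. -/
def StronglyG0Noetherian (ℳ : GModData Γ R M) : Prop :=
  ∀ c : ℕ → AddSubgroup M, ℳ.TightAsc c → ∃ n, ∀ m, n ≤ m → c m = c n

end GModData

/-- `E` is a gr-injective graded right `R`-module: for all graded right `R`-modules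
`M`, `N`, every injective gr-homomorphism `g : N → M` and every gr-homomorphism
`h : N → E`, there is a gr-homomorphism `h' : M → E` with `h' ∘ g = h`. -/
def GrInjective {R : Type u} [AddCommGroup R] (𝒜 : GRingData Γ R) {E : Type u}
    [AddCommGroup E] (ℰ : GModData Γ R E) : Prop :=
  ∀ (M N : Type u) [AddCommGroup M] [AddCommGroup N]
    (ℳ : GModData Γ R M) (𝒩 : GModData Γ R N),
    ℳ.IsGraded 𝒜 → 𝒩.IsGraded 𝒜 →
    ∀ g : N → M, GModData.IsGrHom 𝒩 ℳ g → Function.Injective g →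
    ∀ h : N → E, GModData.IsGrHom 𝒩 ℰ h →
    ∃ h' : M → E, GModData.IsGrHom ℳ ℰ h' ∧ ∀ y : N, h' (g y) = h y

/-- A bundled `Γ`-graded right module over the graded ring `𝒜`. -/
structure GrModule (Γ : Type u) [Groupoid.{u} Γ] {R : Type u} [AddCommGroup R]
    (𝒜 : GRingData Γ R) : Type (u + 1) where
  carrier : Type u
  [addCommGroup : AddCommGroup carrier]
  data : GModData Γ R carrier
  graded : data.IsGraded 𝒜

attribute [instance] GrModule.addCommGroup

namespace GRingData

variable {R : Type u} [AddCommGroup R]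

/-- `R` is right `Γ₀`-noetherian. -/
def RightG0Noetherian (𝒜 : GRingData Γ R) : Prop := 𝒜.toMod.G0Noetherian

/-- `R` is right `Γ₀`-artinian. -/
def RightG0Artinian (𝒜 : GRingData Γ R) : Prop := 𝒜.toMod.G0Artinian

/-- The principal right ideal `aR`. -/
def principal (𝒜 : GRingData Γ R) (a : R) : AddSubgroup R :=
  AddSubgroup.closure {x : R | ∃ b : R, x = 𝒜.mul a b}

/-- A gr-principal graded right ideal: one of the form `aR` with `a` homogeneous. -/
def IsGrPrincipal (𝒜 : GRingData Γ R) (N : AddSubgroup R) : Prop :=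
  ∃ a : R, 𝒜.toMod.IsHomogeneous a ∧ N = 𝒜.principal a

/-- `N` is a graded left ideal of `R`, i.e. a graded submodule of `_R R`. -/
def IsGrLeftIdeal (𝒜 : GRingData Γ R) (N : AddSubgroup R) : Prop :=
  (∀ m ∈ N, ∀ a : R, 𝒜.mul a m ∈ N) ∧
  ∀ n ∈ N, n ∈ AddSubgroup.closure {x : R | x ∈ N ∧ 𝒜.toMod.IsHomogeneous x}

/-- `N` is a gr-maximal graded left ideal of `R`. -/
def IsGrMaxLeftIdeal (𝒜 : GRingData Γ R) (N : AddSubgroup R) : Prop :=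
  𝒜.IsGrLeftIdeal N ∧ N ≠ ⊤ ∧
    ∀ L : AddSubgroup R, 𝒜.IsGrLeftIdeal L → N ≤ L → L = N ∨ L = ⊤

/-- The graded Jacobson radical of `R` as a left module over itself:
the intersection of all gr-maximal graded left ideals. -/
def lRad (𝒜 : GRingData Γ R) : AddSubgroup R := sInf {N | 𝒜.IsGrMaxLeftIdeal N}

/-- `N` is a graded (two-sided) ideal of `R`. -/
def IsGrIdeal (𝒜 : GRingData Γ R) (N : AddSubgroup R) : Prop :=
  𝒜.toMod.IsGrSub N ∧ ∀ m ∈ N, ∀ a : R, 𝒜.mul a m ∈ N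

/-- `N ⊆ R_e` is a left ideal of the unital ring `R_e`. -/
def IsLeftIdealIn (𝒜 : GRingData Γ R) (e : Γ) (N : Set R) : Prop :=
  N ⊆ (𝒜.component (𝟙 e) : Set R) ∧ (0 : R) ∈ N ∧
  (∀ a ∈ N, ∀ b ∈ N, a - b ∈ N) ∧
  ∀ r ∈ 𝒜.component (𝟙 e), ∀ a ∈ N, 𝒜.mul r a ∈ N

/-- `N` is a maximal left ideal of the unital ring `R_e`. -/
def IsMaxLeftIdealIn (𝒜 : GRingData Γ R) (e : Γ) (N : Set R) : Prop :=
  𝒜.IsLeftIdealIn e N ∧ N ≠ (𝒜.component (𝟙 e) : Set R) ∧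
  ∀ L : Set R, 𝒜.IsLeftIdealIn e L → N ⊆ L →
    L = N ∨ L = (𝒜.component (𝟙 e) : Set R)

/-- The Jacobson radical `rad(R_e)` of the unital ring `R_e`, as a subset of `R`:
the intersection of all maximal left ideals of `R_e`. -/
def radIn (𝒜 : GRingData Γ R) (e : Γ) : Set R :=
  (𝒜.component (𝟙 e) : Set R) ∩ ⋂₀ {N : Set R | 𝒜.IsMaxLeftIdealIn e N}

/-- The quotient graded ring `R/I` of `R` by a graded ideal `I`. -/
noncomputable def quotRing (𝒜 : GRingData Γ R) (I : AddSubgroup R) :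
    GRingData Γ (R ⧸ I) where
  mul x y := QuotientAddGroup.mk (𝒜.mul (Quotient.out x) (Quotient.out y))
  component := fun γ => (𝒜.component γ).map (QuotientAddGroup.mk' I)
  one e := QuotientAddGroup.mk (𝒜.one e)

/-- `R` is a gr-semisimple ring. -/
def GrSemisimpleRing (𝒜 : GRingData Γ R) : Prop := 𝒜.toMod.GrSemisimple

/-- `R` is gr-semilocal: the `Γ`-graded ring `R/rad^gr(R)` is gr-semisimple. -/
noncomputable def GrSemilocal (𝒜 : GRingData Γ R) : Prop :=
  ((𝒜.quotRing 𝒜.toMod.grRad).GrSemisimpleRing)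

end GRingData


/-!
The graded submodules of `M` are exactly the additive subgroups stable under the right actions
`m ↦ m a` and under the projections onto the homogeneous components, so they form a complete
sublattice `L` of the subgroup lattice. `L` is modular, and it is compactly generated by the
submodules generated by single homogeneous elements. Every condition of the theorem is a
lattice-theoretic condition on `L`: gr-simple and gr-maximal submodules are the atoms and coatoms,
finite generation is compactness of `⊤`, finite gr-cogeneration is compactness of `⊥` in the dual
lattice, and gr-noetherian and gr-artinian are the two well-foundedness conditions.

In a modular lattice, joining an atom to `b` adds at most one covering step above `b`, so a finite
join of atoms equal to `⊤` forces finite length. A compactly generated modular lattice in which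
`⊤` is a join of atoms is complemented, hence atomistic, and the complement of an atom is a
coatom, so the meet of all coatoms is `⊥`. Dually, if finitely many coatoms meet in `⊥`, the dual
lattice has finite length and is complemented, hence so is `L`.
-/

section CompleteLattice

open CompleteLattice OrderDual

variable {α : Type*} [CompleteLattice α]

theorem isCompactElement_of_wellFoundedGT [WellFoundedGT α] (a : α) : IsCompactElement a :=
  (isSupFiniteCompact_iff_all_elements_compact α).mp (WellFoundedGT.isSupFiniteCompact α) a

theorem isCompactElement_toDual_bot_iff :
    IsCompactElement (toDual (⊥ : α)) ↔
      ∀ s : Set α, sInf s = ⊥ → ∃ t : Finset α, ↑t ⊆ s ∧ t.inf id = ⊥ := by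
  simp only [isCompactElement_iff_exists_le_sSup_of_le_sSup, ← le_bot_iff]
  -- `sSup` and `Finset.sup` in `αᵒᵈ` are `sInf` and `Finset.inf` in `α` by definition
  rfl

theorem exists_finite_atoms_of_isCompactElement_top (h : sSup {a : α | IsAtom a} = ⊤)
    (hk : IsCompactElement (⊤ : α)) :
    ∃ s : Set α, s.Finite ∧ (∀ a ∈ s, IsAtom a) ∧ sSup s = ⊤ := by
  obtain ⟨t, hts, htop⟩ := (isCompactElement_iff_exists_le_sSup_of_le_sSup α ⊤).mp hk _ h.ge
  exact ⟨t, t.finite_toSet, hts, top_unique (t.sup_id_eq_sSup ▸ htop)⟩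

theorem exists_finite_coatoms_of_isCompactElement_toDual_bot
    (h : sInf {c : α | IsCoatom c} = ⊥) (hk : IsCompactElement (toDual (⊥ : α))) :
    ∃ s : Set α, s.Finite ∧ (∀ c ∈ s, IsCoatom c) ∧ sInf s = ⊥ := by
  simp only [← isAtom_dual_iff_isCoatom] at h
  exact exists_finite_atoms_of_isCompactElement_top (α := αᵒᵈ) h hk

variable [IsModularLattice α]

instance CompleteSublattice.isModularLattice (L : CompleteSublattice α) : IsModularLattice L :=
  ⟨fun {_} y _ hxz => Subtype.coe_le_coe.mp
    (IsModularLattice.sup_inf_le_assoc_of_le (y : α) (Subtype.coe_le_coe.mpr hxz))⟩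

theorem finite_Icc_sup_of_isAtom {a : α} (ha : IsAtom a) (b : α) :
    (Set.Icc b (a ⊔ b)).Finite := by
  rcases ha.le_iff.mp (inf_le_left : a ⊓ b ≤ a) with h | h
  · rw [(covBy_sup_of_inf_covBy_left (h ▸ ha.bot_covBy)).Icc_eq]
    exact Set.toFinite _
  · rw [sup_eq_right.mpr (inf_eq_left.mp h), Set.Icc_self]
    exact Set.finite_singleton b

theorem wellFounded_Iic_sSup_of_finite_atoms {s : Set α} (hs : s.Finite)
    (hat : ∀ a ∈ s, IsAtom a) :
    WellFoundedLT (Set.Iic (sSup s)) ∧ WellFoundedGT (Set.Iic (sSup s)) := by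
  induction s, hs using Set.Finite.induction_on with
  | empty =>
    rw [sSup_empty, Set.Iic_bot]
    exact ⟨inferInstance, inferInstance⟩
  | @insert a s _ _ ih =>
    obtain ⟨_, _⟩ := ih fun b hb => hat b (Set.mem_insert_of_mem a hb)
    have := (finite_Icc_sup_of_isAtom (hat a (Set.mem_insert a s)) (sSup s)).to_subtype
    rw [sSup_insert]
    let φ : Set.Iic (a ⊔ sSup s) → Set.Iic (sSup s) × Set.Icc (sSup s) (a ⊔ sSup s) :=
      fun x => (⟨x ⊓ sSup s, inf_le_right⟩, ⟨x ⊔ sSup s, le_sup_right, sup_le x.2 le_sup_right⟩)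
    have hφ : StrictMono φ := fun x y hxy => by
      simpa [φ, Prod.lt_iff, ← Subtype.coe_lt_coe, ← Subtype.coe_le_coe] using
        strictMono_inf_prod_sup (z := sSup s) (Subtype.coe_lt_coe.mpr hxy)
    exact ⟨hφ.wellFoundedLT, hφ.wellFoundedGT⟩

theorem wellFounded_of_sSup_finite_atoms_eq_top {s : Set α} (hs : s.Finite)
    (hat : ∀ a ∈ s, IsAtom a) (htop : sSup s = ⊤) : WellFoundedLT α ∧ WellFoundedGT α := by
  obtain ⟨_, _⟩ := wellFounded_Iic_sSup_of_finite_atoms hs hat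
  rw [htop] at *
  exact ⟨OrderIso.IicTop.symm.strictMono.wellFoundedLT,
    OrderIso.IicTop.symm.strictMono.wellFoundedGT⟩

theorem wellFounded_of_sInf_finite_coatoms_eq_bot {s : Set α} (hs : s.Finite)
    (hcoat : ∀ c ∈ s, IsCoatom c) (hbot : sInf s = ⊥) : WellFoundedLT α ∧ WellFoundedGT α :=
  (wellFounded_of_sSup_finite_atoms_eq_top (α := αᵒᵈ) hs
    (fun c hc => isAtom_dual_iff_isCoatom (α := α).mpr (hcoat c hc)) hbot).symm

theorem exists_iSupIndep_atoms_of_sSup_finite_atoms_eq_top {s : Set α} (hs : s.Finite)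
    (hat : ∀ a ∈ s, IsAtom a) (htop : sSup s = ⊤) :
    ∃ (k : ℕ) (N : Fin k → α), (∀ i, IsAtom (N i)) ∧ iSup N = ⊤ ∧ iSupIndep N := by
  have := (wellFounded_of_sSup_finite_atoms_eq_top hs hat htop).2
  have := isCompactlyGenerated_of_wellFoundedGT (α := α)
  obtain ⟨t, hind, htop', htat⟩ :=
    exists_sSupIndep_of_sSup_atoms_eq_top (top_unique (htop.ge.trans (sSup_le_sSup hat)))
  have := (WellFoundedGT.finite_of_sSupIndep hind).to_subtype
  let e := Finite.equivFin t
  refine ⟨Nat.card t, fun i => e.symm i, fun i => htat (e.symm i).2, ?_,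
    ((sSupIndep_iff t).mp hind).comp e.symm.injective⟩
  rw [← htop', sSup_eq_iSup', ← e.symm.iSup_comp]

theorem sInf_coatoms_eq_bot_of_sSup_atoms_eq_top [IsCompactlyGenerated α]
    (h : sSup {a : α | IsAtom a} = ⊤) : sInf {c : α | IsCoatom c} = ⊥ := by
  have := complementedLattice_of_sSup_atoms_eq_top h
  by_contra hne
  obtain ⟨a, ha, hle⟩ := (eq_bot_or_exists_atom_le _).resolve_left hne
  obtain ⟨c, hc⟩ := exists_isCompl a
  exact ha.1 (hc.disjoint.eq_bot_of_le (hle.trans (sInf_le (hc.isAtom_iff_isCoatom.mp ha))))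

theorem sSup_atoms_eq_top_of_sInf_finite_coatoms_eq_bot {s : Set α} (hs : s.Finite)
    (hcoat : ∀ c ∈ s, IsCoatom c) (hbot : sInf s = ⊥) : sSup {a : α | IsAtom a} = ⊤ := by
  obtain ⟨_, _⟩ := wellFounded_of_sInf_finite_coatoms_eq_bot hs hcoat hbot
  have := isCompactlyGenerated_of_wellFoundedGT (α := α)
  have := isCompactlyGenerated_of_wellFoundedGT (α := αᵒᵈ)
  have htop : sSup (α := αᵒᵈ) s = ⊤ := hbot
  have : ComplementedLattice αᵒᵈ := complementedLattice_of_sSup_atoms_eq_top (top_unique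
    (htop.ge.trans <| sSup_le_sSup fun c hc => isAtom_dual_iff_isCoatom (α := α).mpr (hcoat c hc)))
  have : ComplementedLattice α := inferInstanceAs (ComplementedLattice αᵒᵈᵒᵈ)
  exact sSup_atoms_eq_top

theorem sSup_atoms_eq_top_finite_tfae [IsCompactlyGenerated α] :
    List.TFAE [
      sSup {a : α | IsAtom a} = ⊤ ∧ IsCompactElement (⊤ : α),
      sSup {a : α | IsAtom a} = ⊤ ∧ WellFoundedGT α,
      sSup {a : α | IsAtom a} = ⊤ ∧ WellFoundedLT α,
      sSup {a : α | IsAtom a} = ⊤ ∧ IsCompactElement (toDual (⊥ : α)),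
      ∃ (k : ℕ) (N : Fin k → α), (∀ i, IsAtom (N i)) ∧ iSup N = ⊤ ∧ iSupIndep N,
      sInf {c : α | IsCoatom c} = ⊥ ∧ IsCompactElement (toDual (⊥ : α)),
      sInf {c : α | IsCoatom c} = ⊥ ∧ WellFoundedLT α] := by
  tfae_have 1 → 5 := fun ⟨h, hk⟩ =>
    have ⟨_, hs, hat, htop⟩ := exists_finite_atoms_of_isCompactElement_top h hk
    exists_iSupIndep_atoms_of_sSup_finite_atoms_eq_top hs hat htop
  tfae_have 5 → 3 := fun ⟨_, N, hat, htop, _⟩ =>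
    ⟨top_unique (htop.ge.trans (iSup_le fun i => le_sSup (hat i))),
      (wellFounded_of_sSup_finite_atoms_eq_top (Set.finite_range N)
        (Set.forall_mem_range.mpr hat) (sSup_range.trans htop)).1⟩
  tfae_have 3 → 4 := fun ⟨h, _⟩ => ⟨h, isCompactElement_of_wellFoundedGT (toDual ⊥)⟩
  tfae_have 4 → 6 := fun ⟨h, hk⟩ => ⟨sInf_coatoms_eq_bot_of_sSup_atoms_eq_top h, hk⟩
  tfae_have 6 → 7 := fun ⟨h, hk⟩ =>
    have ⟨_, hs, hcoat, hbot⟩ := exists_finite_coatoms_of_isCompactElement_toDual_bot h hk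
    ⟨h, (wellFounded_of_sInf_finite_coatoms_eq_bot hs hcoat hbot).1⟩
  tfae_have 7 → 2 := fun ⟨h, _⟩ =>
    have ⟨_, hs, hcoat, hbot⟩ := exists_finite_coatoms_of_isCompactElement_toDual_bot h
      (isCompactElement_of_wellFoundedGT (toDual ⊥))
    ⟨sSup_atoms_eq_top_of_sInf_finite_coatoms_eq_bot hs hcoat hbot,
      (wellFounded_of_sInf_finite_coatoms_eq_bot hs hcoat hbot).2⟩
  tfae_have 2 → 1 := fun ⟨h, _⟩ => ⟨h, isCompactElement_of_wellFoundedGT ⊤⟩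
  tfae_finish

end CompleteLattice

def AddSubgroup.invariantSublattice {M : Type*} [AddGroup M] (E : Set (M →+ M)) :
    CompleteSublattice (AddSubgroup M) :=
  CompleteSublattice.mk' {N | ∀ f ∈ E, ∀ x ∈ N, f x ∈ N}
    (fun S hS f hf => show sSup S ≤ (sSup S).comap f from
      sSup_le fun _ hN x hx => le_sSup hN (hS hN f hf x hx))
    (fun _ hS f hf x hx => AddSubgroup.mem_sInf.mpr fun N hN =>
      hS hN f hf x (AddSubgroup.mem_sInf.mp hx N hN))

theorem AddSubgroup.mem_invariantSublattice {M : Type*} [AddGroup M] {E : Set (M →+ M)}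
    {N : AddSubgroup M} : N ∈ invariantSublattice E ↔ ∀ f ∈ E, ∀ x ∈ N, f x ∈ N := by
  rfl

namespace GModData

section

variable {R : Type u} {M : Type u} [AddCommGroup M] {ℳ : GModData Γ R M}

/-- The submodule `mℤ + mR` generated by `m`. -/
def spanSingleton (ℳ : GModData Γ R M) (m : M) : AddSubgroup M :=
  AddSubgroup.closure (insert m (Set.range (ℳ.smul m)))

theorem mem_spanSingleton_self (m : M) : m ∈ ℳ.spanSingleton m :=
  AddSubgroup.subset_closure (Set.mem_insert m _)

theorem spanSingleton_le {m : M} {N : AddSubgroup M} (hmN : m ∈ N)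
    (hN : ∀ x ∈ N, ∀ a, ℳ.smul x a ∈ N) : ℳ.spanSingleton m ≤ N :=
  (AddSubgroup.closure_le _).mpr (Set.insert_subset hmN (Set.range_subset_iff.mpr (hN m hmN)))

theorem spanSingleton_le_rClosure {m : M} {X : Set M} (hm : m ∈ X) :
    ℳ.spanSingleton m ≤ ℳ.rClosure X :=
  le_sInf fun _ ⟨hXN, hN⟩ => ℳ.spanSingleton_le (hXN hm) hN

end

namespace IsGraded

variable {R : Type u} [AddCommGroup R] {M : Type u} [AddCommGroup M]
  {𝒜 : GRingData Γ R} {ℳ : GModData Γ R M} (hℳ : ℳ.IsGraded 𝒜)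

def smulHom (a : R) : M →+ M :=
  AddMonoidHom.mk' (ℳ.smul · a) fun m n => hℳ.add_smul m n a

open scoped Classical in
/-- The projection of `M` onto its homogeneous component `M_γ`. -/
noncomputable def proj (γ : GrIdx Γ) (x : M) : M :=
  if γ ∈ (hℳ.decompose x).choose then (hℳ.decompose x).choose_spec.choose γ else 0

open scoped Classical in
theorem proj_eq {s : Finset (GrIdx Γ)} {cf : GrIdx Γ → M} {x : M}
    (hcf : ∀ γ ∈ s, cf γ ∈ ℳ.component γ.2.2) (hx : x = ∑ γ ∈ s, cf γ) (γ : GrIdx Γ) :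
    hℳ.proj γ x = if γ ∈ s then cf γ else 0 := by
  obtain ⟨hcf₀, hx₀⟩ := (hℳ.decompose x).choose_spec.choose_spec
  set s₀ := (hℳ.decompose x).choose
  set cf₀ := (hℳ.decompose x).choose_spec.choose
  have hdiff : ∀ δ ∈ s ∪ s₀,
      ((if δ ∈ s then cf δ else 0) - (if δ ∈ s₀ then cf₀ δ else 0)) = 0 := by
    apply hℳ.independent
    · intro δ _
      apply sub_mem <;> split <;> first | exact hcf _ ‹_› | exact hcf₀ _ ‹_› | exact zero_mem _
    · rw [Finset.sum_sub_distrib, Finset.sum_ite_mem, Finset.sum_ite_mem,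
        Finset.union_inter_cancel_left, Finset.union_inter_cancel_right, ← hx, ← hx₀, sub_self]
  rw [proj]
  by_cases hγ : γ ∈ s ∪ s₀
  · exact (sub_eq_zero.mp (hdiff γ hγ)).symm
  · rw [Finset.mem_union, not_or] at hγ
    rw [if_neg hγ.1, if_neg hγ.2]

theorem proj_mem (γ : GrIdx Γ) (x : M) : hℳ.proj γ x ∈ ℳ.component γ.2.2 := by
  classical
  rw [proj]
  split
  · exact (hℳ.decompose x).choose_spec.choose_spec.1 _ ‹_›
  · exact zero_mem _

theorem exists_eq_sum_proj (x : M) :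
    ∃ s : Finset (GrIdx Γ), (∀ γ ∉ s, hℳ.proj γ x = 0) ∧ x = ∑ γ ∈ s, hℳ.proj γ x := by
  classical
  obtain ⟨hcf, hx⟩ := (hℳ.decompose x).choose_spec.choose_spec
  refine ⟨(hℳ.decompose x).choose, fun γ hγ => by rw [proj_eq hℳ hcf hx, if_neg hγ], ?_⟩
  conv_lhs => rw [hx]
  exact Finset.sum_congr rfl fun γ hγ => by rw [proj_eq hℳ hcf hx, if_pos hγ]

theorem proj_add (γ : GrIdx Γ) (x y : M) :
    hℳ.proj γ (x + y) = hℳ.proj γ x + hℳ.proj γ y := by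
  classical
  obtain ⟨sx, hx0, hx⟩ := hℳ.exists_eq_sum_proj x
  obtain ⟨sy, hy0, hy⟩ := hℳ.exists_eq_sum_proj y
  have hxy : x + y = ∑ δ ∈ sx ∪ sy, (hℳ.proj δ x + hℳ.proj δ y) := by
    rw [Finset.sum_add_distrib, ← Finset.sum_subset Finset.subset_union_left
        (fun δ _ h => hx0 δ h), ← Finset.sum_subset Finset.subset_union_right
        (fun δ _ h => hy0 δ h), ← hx, ← hy]
  rw [proj_eq hℳ (fun δ _ => add_mem (hℳ.proj_mem δ x) (hℳ.proj_mem δ y)) hxy]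
  split
  · rfl
  · rename_i h
    rw [Finset.mem_union, not_or] at h
    rw [hx0 _ h.1, hy0 _ h.2, add_zero]

noncomputable def projHom (γ : GrIdx Γ) : M →+ M :=
  AddMonoidHom.mk' (hℳ.proj γ) (hℳ.proj_add γ)

theorem proj_mem_of_isHomogeneous {x : M} (hx : ℳ.IsHomogeneous x)
    {N : AddSubgroup M} (hxN : x ∈ N) (γ : GrIdx Γ) : hℳ.proj γ x ∈ N := by
  classical
  obtain ⟨e, f, σ, hx⟩ := hx
  rw [proj_eq hℳ (s := {⟨e, f, σ⟩}) (cf := fun _ => x) (by simpa using hx) (by simp)]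
  split
  · exact hxN
  · exact zero_mem N

def gradedEnd : Set (M →+ M) := Set.range hℳ.smulHom ∪ Set.range hℳ.projHom

def grSubLattice : CompleteSublattice (AddSubgroup M) :=
  AddSubgroup.invariantSublattice hℳ.gradedEnd

theorem mem_grSubLattice {N : AddSubgroup M} : N ∈ hℳ.grSubLattice ↔ ℳ.IsGrSub N := by
  simp only [grSubLattice, AddSubgroup.mem_invariantSublattice, gradedEnd, Set.mem_union, or_imp,
    forall_and, Set.forall_mem_range]
  refine ⟨fun ⟨hsmul, hproj⟩ => ⟨fun m hm a => hsmul a m hm, fun n hn => ?_⟩,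
    fun hN => ⟨fun a m hm => hN.1 m hm a, fun γ n hn => ?_⟩⟩
  · obtain ⟨s, -, hs⟩ := hℳ.exists_eq_sum_proj n
    rw [hs]
    exact sum_mem fun γ _ => AddSubgroup.subset_closure
      ⟨hproj γ n hn, γ.1, γ.2.1, γ.2.2, hℳ.proj_mem γ n⟩
  · refine (AddSubgroup.closure_le (K := N.comap (hℳ.projHom γ)) |>.mpr ?_) (hN.2 n hn)
    rintro x ⟨hxN, hx⟩
    exact hℳ.proj_mem_of_isHomogeneous hx hxN γ

theorem isAtom_iff_isGrSimpleSub {hℳ : ℳ.IsGraded 𝒜} (x : hℳ.grSubLattice) :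
    IsAtom x ↔ ℳ.IsGrSimpleSub x := by
  refine ⟨fun hx => ⟨hℳ.mem_grSubLattice.mp x.2, fun h => hx.1 (Subtype.ext h),
    fun N hN hle => ?_⟩, fun hx => ⟨fun h => hx.2.1 (congrArg Subtype.val h),
    fun y hy => Subtype.ext ((hx.2.2 y (hℳ.mem_grSubLattice.mp y.2) hy.le).resolve_right
      fun h => hy.ne (Subtype.ext h))⟩⟩
  exact (hx.le_iff.mp (show (⟨N, hℳ.mem_grSubLattice.mpr hN⟩ : hℳ.grSubLattice) ≤ x from
    hle)).imp (congrArg Subtype.val) (congrArg Subtype.val)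

theorem isCoatom_iff_isGrMaximalSub {hℳ : ℳ.IsGraded 𝒜} (x : hℳ.grSubLattice) :
    IsCoatom x ↔ ℳ.IsGrMaximalSub x := by
  refine ⟨fun hx => ⟨hℳ.mem_grSubLattice.mp x.2, fun h => hx.1 (Subtype.ext h),
    fun N hN hle => ?_⟩, fun hx => ⟨fun h => hx.2.1 (congrArg Subtype.val h),
    fun y hy => Subtype.ext ((hx.2.2 y (hℳ.mem_grSubLattice.mp y.2) hy.le).resolve_left
      fun h => hy.ne (Subtype.ext h).symm)⟩⟩
  exact (hx.le_iff.mp (show x ≤ (⟨N, hℳ.mem_grSubLattice.mpr hN⟩ : hℳ.grSubLattice) from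
    hle)).symm.imp (congrArg Subtype.val) (congrArg Subtype.val)

theorem grSemisimple_iff_sSup_atoms_eq_top :
    ℳ.GrSemisimple ↔ sSup {x : hℳ.grSubLattice | IsAtom x} = ⊤ := by
  have : {(x : AddSubgroup M) | x ∈ {x : hℳ.grSubLattice | IsAtom x}} =
      {N | ℳ.IsGrSimpleSub N} := by
    ext N
    refine ⟨fun ⟨x, hx, hxN⟩ => hxN ▸ (isAtom_iff_isGrSimpleSub x).mp hx, fun hN => ?_⟩
    exact ⟨⟨N, hℳ.mem_grSubLattice.mpr hN.1⟩, (isAtom_iff_isGrSimpleSub _).mpr hN, rfl⟩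
  rw [GrSemisimple, ← Subtype.coe_inj, CompleteSublattice.coe_sSup, this,
    CompleteSublattice.coe_top]

theorem grRad_eq_bot_iff_sInf_coatoms_eq_bot :
    ℳ.grRad = ⊥ ↔ sInf {x : hℳ.grSubLattice | IsCoatom x} = ⊥ := by
  have : {(x : AddSubgroup M) | x ∈ {x : hℳ.grSubLattice | IsCoatom x}} =
      {N | ℳ.IsGrMaximalSub N} := by
    ext N
    refine ⟨fun ⟨x, hx, hxN⟩ => hxN ▸ (isCoatom_iff_isGrMaximalSub x).mp hx, fun hN => ?_⟩
    exact ⟨⟨N, hℳ.mem_grSubLattice.mpr hN.1⟩, (isCoatom_iff_isGrMaximalSub _).mpr hN, rfl⟩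
  rw [grRad, ← Subtype.coe_inj, CompleteSublattice.coe_sInf, this,
    CompleteSublattice.coe_bot]

theorem grNoetherian_iff_wellFoundedGT : ℳ.GrNoetherian ↔ WellFoundedGT hℳ.grSubLattice := by
  refine ⟨fun h => ⟨RelEmbedding.wellFounded_iff_isEmpty.mpr ⟨fun f => h ?_⟩⟩,
    fun _ ⟨c, hc, hlt⟩ => ?_⟩
  · exact ⟨fun n => f n, fun n => hℳ.mem_grSubLattice.mp (f n).2,
      fun n => f.map_rel_iff.mpr n.lt_succ_self⟩
  · exact not_strictMono_of_wellFoundedGT (fun n => (⟨c n, hℳ.mem_grSubLattice.mpr (hc n)⟩ :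
      hℳ.grSubLattice)) (strictMono_nat_of_lt_succ hlt)

theorem grArtinian_iff_wellFoundedLT : ℳ.GrArtinian ↔ WellFoundedLT hℳ.grSubLattice := by
  refine ⟨fun h => ⟨RelEmbedding.wellFounded_iff_isEmpty.mpr ⟨fun f => h ?_⟩⟩,
    fun _ ⟨c, hc, hlt⟩ => ?_⟩
  · exact ⟨fun n => f n, fun n => hℳ.mem_grSubLattice.mp (f n).2,
      fun n => f.map_rel_iff.mpr n.lt_succ_self⟩
  · exact not_strictAnti_of_wellFoundedLT (fun n => (⟨c n, hℳ.mem_grSubLattice.mpr (hc n)⟩ :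
      hℳ.grSubLattice)) (strictAnti_nat_of_succ_lt hlt)

theorem finGrCogenerated_iff_isCompactElement_toDual_bot :
    ℳ.FinGrCogenerated ↔ IsCompactElement (OrderDual.toDual (⊥ : hℳ.grSubLattice)) := by
  classical
  rw [isCompactElement_toDual_bot_iff]
  refine ⟨fun h s hs => ?_, fun h S hS hSbot => ?_⟩
  · obtain ⟨t, hts, ht⟩ := h (Subtype.val '' s)
      (by rintro _ ⟨x, -, rfl⟩; exact hℳ.mem_grSubLattice.mp x.2) (congrArg Subtype.val hs)
    obtain ⟨t', ht's, rfl⟩ := Finset.subset_set_image_iff.mp hts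
    rw [Finset.inf_image] at ht
    exact ⟨t', ht's, Subtype.ext ((map_finset_inf hℳ.grSubLattice.subtype t' id).trans ht)⟩
  · have hS' : Subtype.val '' (Subtype.val ⁻¹' S : Set hℳ.grSubLattice) = S :=
      Set.image_preimage_eq_of_subset fun N hN =>
        ⟨⟨N, hℳ.mem_grSubLattice.mpr (hS N hN)⟩, rfl⟩
    obtain ⟨t, hts, ht⟩ := h (Subtype.val ⁻¹' S) (Subtype.ext ((congrArg sInf hS').trans hSbot))
    refine ⟨t.image Subtype.val, ?_, ?_⟩
    · rw [Finset.coe_image]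
      exact (Set.image_mono hts).trans (Set.image_preimage_subset _ _)
    · rw [Finset.inf_image]
      exact (map_finset_inf hℳ.grSubLattice.subtype t id).symm.trans (congrArg Subtype.val ht)

theorem iSupIndep_iff_inf_iSup_eq_bot {hℳ : ℳ.IsGraded 𝒜} {ι : Type*}
    (N : ι → hℳ.grSubLattice) :
    iSupIndep N ↔ ∀ i, (N i : AddSubgroup M) ⊓ ⨆ j, ⨆ (_ : j ≠ i), (N j : AddSubgroup M) = ⊥ := by
  refine forall_congr' fun i => ?_
  rw [disjoint_iff, ← Subtype.coe_inj]
  show (N i : AddSubgroup M) ⊓ ↑(⨆ j, ⨆ (_ : j ≠ i), N j) = ⊥ ↔ _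
  simp only [CompleteSublattice.coe_iSup]

theorem exists_iSupIndep_atoms_iff :
    (∃ (k : ℕ) (N : Fin k → AddSubgroup M), (∀ i, ℳ.IsGrSimpleSub (N i)) ∧
        (⨆ i, N i) = ⊤ ∧ ∀ i : Fin k, N i ⊓ (⨆ j, ⨆ (_ : j ≠ i), N j) = ⊥) ↔
      ∃ (k : ℕ) (N : Fin k → hℳ.grSubLattice), (∀ i, IsAtom (N i)) ∧ iSup N = ⊤ ∧
        iSupIndep N := by
  refine ⟨fun ⟨k, N, hsimple, htop, hind⟩ => ?_, fun ⟨k, N, hat, htop, hind⟩ => ?_⟩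
  · let N' i : hℳ.grSubLattice := ⟨N i, hℳ.mem_grSubLattice.mpr (hsimple i).1⟩
    exact ⟨k, N', fun i => (isAtom_iff_isGrSimpleSub _).mpr (hsimple i),
      Subtype.ext ((CompleteSublattice.coe_iSup N').trans htop),
      (iSupIndep_iff_inf_iSup_eq_bot N').mpr hind⟩
  · exact ⟨k, fun i => N i, fun i => (isAtom_iff_isGrSimpleSub _).mp (hat i),
      (CompleteSublattice.coe_iSup N).symm.trans (congrArg Subtype.val htop),
      (iSupIndep_iff_inf_iSup_eq_bot N).mp hind⟩

theorem spanSingleton_mem_grSubLattice (h𝒜 : 𝒜.IsObjectUnital) {m : M}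
    (hm : ℳ.IsHomogeneous m) : ℳ.spanSingleton m ∈ hℳ.grSubLattice := by
  obtain ⟨e, f, σ, hσ⟩ := hm
  have hmul : ∀ b, ℳ.smul m b ∈ ℳ.spanSingleton m := fun b =>
    AddSubgroup.subset_closure (Set.mem_insert_of_mem _ ⟨b, rfl⟩)
  show ∀ φ ∈ hℳ.gradedEnd, _
  rintro φ (⟨a, rfl⟩ | ⟨γ, rfl⟩) x hx
  · refine (AddSubgroup.closure_le (K := (ℳ.spanSingleton m).comap (hℳ.smulHom a))).mpr ?_ hx
    rintro y (hy | ⟨b, rfl⟩)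
    · rw [hy]
      exact hmul a
    · show ℳ.smul (ℳ.smul m b) a ∈ ℳ.spanSingleton m
      rw [← hℳ.smul_mul]
      exact hmul _
  · refine (AddSubgroup.closure_le (K := (ℳ.spanSingleton m).comap (hℳ.projHom γ))).mpr ?_ hx
    rintro y (hy | ⟨b, rfl⟩)
    · rw [hy]
      exact hℳ.proj_mem_of_isHomogeneous ⟨e, f, σ, hσ⟩ (ℳ.mem_spanSingleton_self m) γ
    · obtain ⟨s, cf, hcf, rfl⟩ := h𝒜.decompose b
      have hsum : ℳ.smul m (∑ τ ∈ s, cf τ) = ∑ τ ∈ s, ℳ.smul m (cf τ) :=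
        map_sum (AddMonoidHom.mk' (ℳ.smul m) (hℳ.smul_add m)) cf s
      show hℳ.projHom γ (ℳ.smul m (∑ τ ∈ s, cf τ)) ∈ ℳ.spanSingleton m
      rw [hsum, map_sum]
      refine sum_mem fun τ hτ => hℳ.proj_mem_of_isHomogeneous ?_ (hmul _) γ
      obtain ⟨g, h, τ⟩ := τ
      rcases eq_or_ne h e with rfl | hne
      · exact ⟨_, _, _, hℳ.smul_mem σ τ hσ (hcf _ hτ)⟩
      · exact ⟨_, _, σ, (hℳ.smul_eq_zero σ τ hne hσ (hcf _ hτ)).symm ▸ zero_mem _⟩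

theorem isCompactElement_spanSingleton {hℳ : ℳ.IsGraded 𝒜} {m : M}
    (h : ℳ.spanSingleton m ∈ hℳ.grSubLattice) :
    IsCompactElement (⟨ℳ.spanSingleton m, h⟩ : hℳ.grSubLattice) := by
  rw [CompleteLattice.isCompactElement_iff_le_of_directed_sSup_le]
  intro s hne hdir hle
  obtain ⟨_, ⟨x, hxs, rfl⟩, hmx⟩ := (AddSubgroup.mem_sSup_of_directedOn (hne.image _)
    (directedOn_image.mpr hdir)).mp (hle (ℳ.mem_spanSingleton_self m))
  exact ⟨x, hxs, ℳ.spanSingleton_le hmx (hℳ.mem_grSubLattice.mp x.2).1⟩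

theorem sSup_spanSingleton (h𝒜 : 𝒜.IsObjectUnital) (x : hℳ.grSubLattice) :
    sSup {y : hℳ.grSubLattice | ∃ m ∈ (x : AddSubgroup M), ℳ.IsHomogeneous m ∧
      (y : AddSubgroup M) = ℳ.spanSingleton m} = x := by
  set S := {y : hℳ.grSubLattice | ∃ m ∈ (x : AddSubgroup M), ℳ.IsHomogeneous m ∧
      (y : AddSubgroup M) = ℳ.spanSingleton m}
  refine le_antisymm (sSup_le ?_) fun n hn => ?_
  · rintro y ⟨m, hmx, -, hy⟩
    exact (hy ▸ ℳ.spanSingleton_le hmx (hℳ.mem_grSubLattice.mp x.2).1 : (y : AddSubgroup M) ≤ x)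
  · refine ((AddSubgroup.closure_le _).mpr ?_) ((hℳ.mem_grSubLattice.mp x.2).2 n hn)
    rintro m ⟨hmx, hm⟩
    let y : hℳ.grSubLattice := ⟨_, hℳ.spanSingleton_mem_grSubLattice h𝒜 hm⟩
    have hy : y ∈ S := ⟨m, hmx, hm, rfl⟩
    exact Subtype.coe_le_coe.mpr (le_sSup hy) (ℳ.mem_spanSingleton_self m)

theorem isCompactlyGenerated (h𝒜 : 𝒜.IsObjectUnital) :
    IsCompactlyGenerated hℳ.grSubLattice :=
  ⟨fun x => ⟨_, by rintro ⟨_, h⟩ ⟨m, -, -, rfl⟩; exact isCompactElement_spanSingleton h,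
    hℳ.sSup_spanSingleton h𝒜 x⟩⟩

theorem fg_iff_isCompactElement_top (h𝒜 : 𝒜.IsObjectUnital) :
    ℳ.FG ↔ IsCompactElement (⊤ : hℳ.grSubLattice) := by
  classical
  refine ⟨fun ⟨s, hs⟩ => ?_, fun hk => ?_⟩
  · rw [CompleteLattice.isCompactElement_iff_le_of_directed_sSup_le]
    intro D hne hdir hle
    have hsub : (s : Set M) ⊆ ⋃ x ∈ D, (x : Set M) := fun m _ => by
      obtain ⟨_, ⟨x, hxD, rfl⟩, hmx⟩ := (AddSubgroup.mem_sSup_of_directedOn (hne.image _)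
        (directedOn_image.mpr hdir)).mp (hle (AddSubgroup.mem_top m))
      exact Set.mem_biUnion hxD hmx
    obtain ⟨x, hxD, hsx⟩ := hdir.exists_mem_subset_of_finset_subset_biUnion hne hsub
    refine ⟨x, hxD, ?_⟩
    show (⊤ : AddSubgroup M) ≤ x
    rw [← hs]
    exact sInf_le ⟨hsx, (hℳ.mem_grSubLattice.mp x.2).1⟩
  · obtain ⟨t, hts, htop⟩ :=
      (CompleteLattice.isCompactElement_iff_exists_le_sSup_of_le_sSup _ ⊤).mp hk _
        (hℳ.sSup_spanSingleton h𝒜 ⊤).ge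
    choose! g hg using fun y (hy : y ∈ t) => hts hy
    refine ⟨t.image g, top_unique ((Subtype.coe_le_coe.mpr htop).trans ?_)⟩
    rw [← CompleteSublattice.coe_subtype, map_finset_sup]
    exact Finset.sup_le fun y hy => show (y : AddSubgroup M) ≤ _ from (hg y hy).2.2 ▸
      ℳ.spanSingleton_le_rClosure (Finset.mem_coe.mpr (Finset.mem_image_of_mem g hy))

end IsGraded

end GModData

/-- Let `R` be a `Γ`-graded ring and `M` a `Γ`-graded right
`R`-module. The following are equivalent: (1) `M` is gr-semisimple and finitely
generated; (2) `M` is gr-semisimple and gr-noetherian; (3) `M` is gr-semisimple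
and gr-artinian; (4) `M` is gr-semisimple and finitely gr-cogenerated; (5) `M`
is a finite (internal) direct sum of gr-simple graded submodules;
(6) `rad^gr(M) = 0` and `M` is finitely gr-cogenerated; (7) `rad^gr(M) = 0` and
`M` is gr-artinian. -/
theorem grSemisimple_fg_tfae
    {Γ : Type u} [Groupoid.{u} Γ] {R : Type u} [AddCommGroup R] {M : Type u}
    [AddCommGroup M] (𝒜 : GRingData Γ R) (h𝒜 : 𝒜.IsObjectUnital)
    (ℳ : GModData Γ R M) (hℳ : ℳ.IsGraded 𝒜) :
    List.TFAE [
      ℳ.GrSemisimple ∧ ℳ.FG,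
      ℳ.GrSemisimple ∧ ℳ.GrNoetherian,
      ℳ.GrSemisimple ∧ ℳ.GrArtinian,
      ℳ.GrSemisimple ∧ ℳ.FinGrCogenerated,
      ∃ (k : ℕ) (N : Fin k → AddSubgroup M), (∀ i, ℳ.IsGrSimpleSub (N i)) ∧
        (⨆ i, N i) = ⊤ ∧ ∀ i : Fin k, N i ⊓ (⨆ j, ⨆ (_ : j ≠ i), N j) = ⊥,
      ℳ.grRad = ⊥ ∧ ℳ.FinGrCogenerated,
      ℳ.grRad = ⊥ ∧ ℳ.GrArtinian ] := by
  have := hℳ.isCompactlyGenerated h𝒜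
  rw [hℳ.fg_iff_isCompactElement_top h𝒜, hℳ.grSemisimple_iff_sSup_atoms_eq_top,
    hℳ.grNoetherian_iff_wellFoundedGT, hℳ.grArtinian_iff_wellFoundedLT,
    hℳ.finGrCogenerated_iff_isCompactElement_toDual_bot, hℳ.exists_iSupIndep_atoms_iff,
    hℳ.grRad_eq_bot_iff_sInf_coatoms_eq_bot]
  exact sSup_atoms_eq_top_finite_tfae
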